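/- The Banach space L₁(μ) (for any measure μ) is a metric space of negative type: the metric space (L₁(μ), √(‖x−y‖₁)) embeds isometrically into a Hilbert space. Equivalently, for any x₁,…,x_n ∈ L₁(μ) and c₁,…,c_n ∈ ℝ with Σ cᵢ = 0, we have Σᵢ Σⱼ cᵢ cⱼ ‖xᵢ − xⱼ‖₁ ≤ 0. -/

import Mathlib

/-!
For `m` below all the points, `|a - b| = (a - m) + (b - m) - 2 λ((m, a] ∩ (m, b])`, and the
kernel `λ(sᵢ ∩ sⱼ)` is a Gram matrix of indicators in `L²`, hence positive semidefinite. When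
`∑ cᵢ = 0` the two linear terms cancel, so the real line is of negative type. The `L¹` distance is
the integral of pointwise distances, and integrating the pointwise inequality gives the theorem.
-/

open MeasureTheory Set

def NegativeType {X : Type*} (d : X → X → ℝ) : Prop :=
  ∀ ⦃n : ℕ⦄ (x : Fin n → X) (c : Fin n → ℝ), ∑ i, c i = 0 →
    ∑ i, ∑ j, c i * c j * d (x i) (x j) ≤ 0

theorem Matrix.PosSemidef.sum_sum_mul_mul_nonneg {ι : Type*} [Fintype ι] {K : Matrix ι ι ℝ}
    (hK : K.PosSemidef) (c : ι → ℝ) : 0 ≤ ∑ i, ∑ j, c i * c j * K i j := by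
  refine (hK.dotProduct_mulVec_nonneg c).trans_eq ?_
  simp only [dotProduct, Matrix.mulVec, star_trivial, Finset.mul_sum]
  exact Finset.sum_congr rfl fun i _ => Finset.sum_congr rfl fun j _ => by ring

theorem sum_sum_mul_mul_add_eq_zero {ι : Type*} [Fintype ι] {c : ι → ℝ} (hc : ∑ i, c i = 0)
    (f : ι → ℝ) : ∑ i, ∑ j, c i * c j * (f i + f j) = 0 := by
  simp only [mul_add, mul_assoc, Finset.sum_add_distrib, ← Finset.mul_sum, ← Finset.sum_mul, hc]
  simp

theorem abs_sub_eq_measureReal_Ioc {m a b : ℝ} (ha : m ≤ a) (hb : m ≤ b) :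
    |a - b| = (a - m) + (b - m) - 2 * volume.real (Ioc m a ∩ Ioc m b) := by
  rw [Ioc_inter_Ioc, max_self, Real.volume_real_Ioc_of_le (le_min ha hb), ← max_sub_min_eq_abs']
  linarith [min_add_max a b]

theorem negativeType_dist_real : NegativeType (dist : ℝ → ℝ → ℝ) := by
  intro n x c hc
  obtain ⟨m, hm⟩ := (finite_range x).bddBelow
  have hmx : ∀ i, m ≤ x i := fun i => hm (mem_range_self i)
  have hsplit : ∀ i j, c i * c j * dist (x i) (x j) = c i * c j * ((x i - m) + (x j - m))
      - 2 * (c i * c j * volume.real (Ioc m (x i) ∩ Ioc m (x j))) := fun i j => by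
    rw [Real.dist_eq, abs_sub_eq_measureReal_Ioc (hmx i) (hmx j)]
    ring
  have hgram := (posSemidef_matrix_measure_inter (μ := volume) (s := fun i => Ioc m (x i))
    (fun _ => measurableSet_Ioc) (fun _ => measure_Ioc_lt_top.ne)).sum_sum_mul_mul_nonneg c
  simp only [Matrix.of_apply] at hgram
  simp only [hsplit, Finset.sum_sub_distrib, ← Finset.mul_sum, sum_sum_mul_mul_add_eq_zero hc]
  linarith

theorem NegativeType.L1_dist {α E : Type*} [MeasurableSpace α] {μ : Measure α}
    [NormedAddCommGroup E] (hE : NegativeType (dist : E → E → ℝ)) :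
    NegativeType (dist : (α →₁[μ] E) → (α →₁[μ] E) → ℝ) := by
  intro n f c hc
  have hint : ∀ i j, Integrable (fun a => c i * c j * dist (f i a) (f j a)) μ := fun i j =>
    (((L1.integrable_coeFn (f i)).sub (L1.integrable_coeFn (f j))).norm.congr
      (.of_forall fun a => (dist_eq_norm _ _).symm)).const_mul _
  calc ∑ i, ∑ j, c i * c j * dist (f i) (f j)
      = ∫ a, ∑ i, ∑ j, c i * c j * dist (f i a) (f j a) ∂μ := by
        simp only [L1.dist_eq_integral_dist, ← integral_const_mul]
        rw [integral_finsetSum _ fun i _ => integrable_finsetSum _ fun j _ => hint i j]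
        exact Finset.sum_congr rfl fun i _ => (integral_finsetSum _ fun j _ => hint i j).symm
    _ ≤ 0 := integral_nonpos fun a => hE (fun i => f i a) c hc

/-- `L₁(μ)` is of negative type: for any `x₁,…,xₙ ∈ L₁(μ)` and reals
`c₁,…,cₙ` with `∑ cᵢ = 0`, we have `∑ᵢ∑ⱼ cᵢcⱼ ‖xᵢ − xⱼ‖₁ ≤ 0`. -/
theorem L1_negative_type {α : Type*} [MeasurableSpace α] (μ : Measure α)
    (n : ℕ) (x : Fin n → Lp ℝ 1 μ) (c : Fin n → ℝ) (hc : ∑ i, c i = 0) :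
    ∑ i, ∑ j, c i * c j * ‖x i - x j‖ ≤ 0 := by
  simpa only [dist_eq_norm] using negativeType_dist_real.L1_dist x c hc
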